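/- For every k ∈ ℕ there is K ∈ ℕ (depending only on k) such that the following holds for every deterministic complete finite automaton with state set Q of size k over an alphabet Σ, with total transition function δ : Q × Σ → Q extended to words as δ* : Q × Σ* → Q: for all words w_1, …, w_K ∈ Σ* and all states q_1, …, q_K ∈ Q, there exist indices 1 ≤ s < t ≤ K such that, letting q := δ*(q_s, w_{s+1} w_{s+2} ⋯ w_{t-1}), we have δ*(q, w_s w_{s+1} ⋯ w_{t-1}) = q. -/

import Mathlib

namespace DocSpanners

/-- A span: a pair of endpoint positions `[i, j⟩`. -/
abbrev Span : Type := ℕ × ℕ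

/-- `s` is a span of document `d`. -/
def IsSpanOf {α : Type} (d : List α) (s : Span) : Prop :=
  s.1 ≤ s.2 ∧ s.2 ≤ d.length

/-- A (schemaless) mapping over variable type `V`: a partial assignment of spans. -/
abbrev Mapping (V : Type) : Type := V → Option Span

/-- `m` is a mapping of document `d`. -/
def MappingOf {α V : Type} (d : List α) (m : Mapping V) : Prop :=
  ∀ x s, m x = some s → IsSpanOf d s

/-- A spanner: maps documents to sets of mappings. -/
abbrev Spanner (α V : Type) : Type := List α → Set (Mapping V)

/-- Labels of a variable-set automaton: letters and variable markers. -/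
inductive Label (α V : Type) : Type where
  | letter (a : α)
  | vopen (x : V)
  | vclose (x : V)
deriving DecidableEq

/-- The sequence of letters of a ref-word. -/
def letters {α V : Type} (w : List (Label α V)) : List α :=
  w.filterMap fun l => match l with
    | Label.letter a => some a
    | _ => none

/-- A ref-word is valid if for each variable, either its markers do not appear, or
the opening and closing markers appear exactly once with the opening first. -/
def ValidRef {α V : Type} [DecidableEq α] [DecidableEq V] (w : List (Label α V)) : Prop :=
  ∀ x : V,
    (Label.vopen x ∉ w ∧ Label.vclose x ∉ w) ∨
    (w.count (Label.vopen x) = 1 ∧ w.count (Label.vclose x) = 1 ∧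
      w.idxOf (Label.vopen x) < w.idxOf (Label.vclose x))

/-- The mapping defined by a (valid) ref-word: each marked variable is sent to the
span delimited by the positions at which its markers are read. -/
def refMapping {α V : Type} [DecidableEq α] [DecidableEq V] (w : List (Label α V)) :
    Mapping V := fun x =>
  if Label.vopen x ∈ w then
    some ((letters (w.take (w.idxOf (Label.vopen x)))).length,
          (letters (w.take (w.idxOf (Label.vclose x)))).length)
  else none

/-- A variable-set automaton with state type `Q`. -/
structure VA (α V Q : Type) : Type where
  init : Q
  final : Set Q
  trans : Q → Label α V → Q → Prop

/-- Paths in a VA. -/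
inductive VA.Path {α V Q : Type} (A : VA α V Q) : Q → List (Label α V) → Q → Prop where
  | nil (q : Q) : VA.Path A q [] q
  | cons {q q' q'' : Q} {l : Label α V} {w : List (Label α V)} :
      A.trans q l q' → VA.Path A q' w q'' → VA.Path A q (l :: w) q''

/-- The VA accepts the ref-word `w` (an accepting run reads `w`). -/
def VA.AcceptsRef {α V Q : Type} (A : VA α V Q) (w : List (Label α V)) : Prop :=
  ∃ qf ∈ A.final, A.Path A.init w qf

/-- A VA is sequential if every accepting run is valid. -/
def VA.Sequential {α V Q : Type} [DecidableEq α] [DecidableEq V] (A : VA α V Q) : Prop :=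
  ∀ w, A.AcceptsRef w → ValidRef w

/-- The spanner defined by a (sequential) VA. -/
def VA.spanner {α V Q : Type} [DecidableEq α] [DecidableEq V] (A : VA α V Q) :
    Spanner α V := fun d =>
  {m | ∃ w, A.AcceptsRef w ∧ letters w = d ∧ refMapping w = m}

/-- A spanner is regular if it is defined by some sequential VA with finitely many states. -/
def IsRegular {α V : Type} [DecidableEq α] [DecidableEq V] (P : Spanner α V) : Prop :=
  ∃ (Q : Type) (_ : Fintype Q) (A : VA α V Q), A.Sequential ∧ A.spanner = P

/-- The skyline operator: keep only the mappings of `P d` that are maximal under `R d`. -/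
def skyline {α V : Type} (P : Spanner α V)
    (R : List α → Mapping V → Mapping V → Prop) : Spanner α V := fun d =>
  {m | m ∈ P d ∧ ∀ m' ∈ P d, m' ≠ m → ¬ R d m m'}

/-- The variable inclusion domination relation: `m2` extends `m1`. -/
def varIncRel {V : Type} (m1 m2 : Mapping V) : Prop :=
  ∀ x s, m1 x = some s → m2 x = some s

/-- Two mappings have the same domain. -/
def sameDom {V : Type} (m1 m2 : Mapping V) : Prop :=
  ∀ x, m1 x = none ↔ m2 x = none

/-- The span inclusion domination relation. -/
def spanIncRel {V : Type} (m1 m2 : Mapping V) : Prop :=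
  sameDom m1 m2 ∧
    ∀ x s1 s2, m1 x = some s1 → m2 x = some s2 → s2.1 ≤ s1.1 ∧ s1.2 ≤ s2.2

/-- The left-to-right domination relation: same start, `m2` no shorter. -/
def ltrRel {V : Type} (m1 m2 : Mapping V) : Prop :=
  sameDom m1 m2 ∧
    ∀ x s1 s2, m1 x = some s1 → m2 x = some s2 →
      s1.1 = s2.1 ∧ s1.2 - s1.1 ≤ s2.2 - s2.1

/-- The span length domination relation: `m2`'s spans are no shorter. -/
def spanLenRel {V : Type} (m1 m2 : Mapping V) : Prop :=
  sameDom m1 m2 ∧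
    ∀ x s1 s2, m1 x = some s1 → m2 x = some s2 → s1.2 - s1.1 ≤ s2.2 - s2.1

/-!
Colour each pair `s < t` by the state transformation `δ*(·, w_s ⋯ w_{t-1})`; these colours
compose along consecutive intervals. Ramsey's theorem for triangles, with `k ^ k` colours, gives
`s < t < u` on which the three colours agree, so the common transformation `f` satisfies
`f ∘ f = f`. The state `q = δ*(q_s, w_{s+1} ⋯ w_{u-1})` lies in the image of `f`, since the word
ends with `w_t ⋯ w_{u-1}`, and `f` is the transformation of `w_s ⋯ w_{u-1}`, which therefore
fixes `q`.
-/

section Ramsey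

variable {C : Type*} [Fintype C] (c : ℕ → ℕ → C)

theorem exists_chain_color_eq_of_left (n : ℕ) (S : Finset ℕ)
    (hS : (Fintype.card C + 1) ^ n ≤ S.card) :
    ∃ (v : Fin n → ℕ) (d : Fin n → C), (∀ i, v i ∈ S) ∧
      ∀ i j, i < j → v i < v j ∧ c (v i) (v j) = d i := by
  classical
  induction n generalizing S with
  | zero => exact ⟨Fin.elim0, Fin.elim0, fun i => Fin.elim0 i, fun i => Fin.elim0 i⟩
  | succ n ih =>
    have hne : S.Nonempty := Finset.card_pos.mp (lt_of_lt_of_le (by positivity) hS)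
    set m := S.min' hne
    have hcard : Fintype.card C * (Fintype.card C + 1) ^ n ≤ (S.erase m).card := by
      rw [Finset.card_erase_of_mem (S.min'_mem hne)]
      have : 1 ≤ (Fintype.card C + 1) ^ n := Nat.one_le_pow _ _ (Nat.succ_pos _)
      have : (Fintype.card C + 1) ^ (n + 1) = Fintype.card C * (Fintype.card C + 1) ^ n +
          (Fintype.card C + 1) ^ n := by ring
      omega
    obtain ⟨d₀, -, hd₀⟩ := Finset.exists_le_card_fiber_of_mul_le_card_of_maps_to
      (f := c m) (fun _ _ => Finset.mem_univ _) ⟨c m m, Finset.mem_univ _⟩ hcard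
    obtain ⟨v, d, hvS, hvd⟩ := ih _ hd₀
    have hv : ∀ i, v i ∈ S.erase m ∧ c m (v i) = d₀ := fun i => Finset.mem_filter.mp (hvS i)
    refine ⟨Fin.cons m v, Fin.cons d₀ d, Fin.cases (S.min'_mem hne)
      (fun i => Finset.mem_of_mem_erase (hv i).1), ?_⟩
    intro i j hij
    obtain ⟨j, rfl⟩ := Fin.exists_succ_eq.mpr (Fin.pos_of_ne_zero hij.ne_bot).ne'
    cases i using Fin.cases with
    | zero =>
      obtain ⟨hvm, hvS⟩ := Finset.mem_erase.mp (hv j).1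
      exact ⟨lt_of_le_of_ne (S.min'_le _ hvS) (Ne.symm hvm), (hv j).2⟩
    | succ i => exact hvd i j (Fin.succ_lt_succ_iff.mp hij)

theorem exists_monochromatic_triangle :
    ∃ s t u, 1 ≤ s ∧ s < t ∧ t < u ∧ u ≤ (Fintype.card C + 1) ^ (Fintype.card C + 2) ∧
      c s t = c s u ∧ c t u = c s u := by
  obtain ⟨v, d, hvS, hvd⟩ := exists_chain_color_eq_of_left c (Fintype.card C + 2)
    (Finset.Icc 1 ((Fintype.card C + 1) ^ (Fintype.card C + 2))) (by simp)
  obtain ⟨i, j, hij, hdij⟩ := Fintype.exists_ne_map_eq_of_card_lt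
    (fun i : Fin (Fintype.card C + 1) => d i.castSucc) (by simp)
  wlog hlt : i < j generalizing i j
  · exact this j i hij.symm hdij.symm (lt_of_le_of_ne (not_lt.mp hlt) hij.symm)
  have hst := hvd i.castSucc j.castSucc (Fin.castSucc_lt_castSucc_iff.mpr hlt)
  have hsu := hvd i.castSucc j.succ
    ((Fin.castSucc_lt_castSucc_iff.mpr hlt).trans j.castSucc_lt_succ)
  have htu := hvd j.castSucc j.succ j.castSucc_lt_succ
  refine ⟨_, _, _, (Finset.mem_Icc.mp (hvS _)).1, hst.1, htu.1, (Finset.mem_Icc.mp (hvS _)).2,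
    hst.2.trans hsu.2.symm, htu.2.trans (hdij.symm.trans hsu.2.symm)⟩

end Ramsey

section RunMap

variable {Q α : Type*} (δ : Q → α → Q) (w : ℕ → List α)

/-- The state transformation `δ*(·, w_s ⋯ w_{t-1})`. -/
def runMap (s t : ℕ) : Q → Q :=
  fun x => (((List.Ico s t).map w).flatten).foldl δ x

theorem runMap_comp {s t u : ℕ} (hst : s ≤ t) (htu : t ≤ u) :
    runMap δ w t u ∘ runMap δ w s t = runMap δ w s u := by
  ext x
  simp only [runMap, Function.comp_apply, ← List.foldl_append, ← List.flatten_append,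
    ← List.map_append, List.Ico.append_consecutive hst htu]

end RunMap

/-- For every `k` there is `K` (depending only on `k`) such that for
every deterministic complete automaton with `k` states, all words `w_1, …, w_K` and all
states `q_1, …, q_K`, there are `1 ≤ s < t ≤ K` such that, letting
`q := δ*(q_s, w_{s+1} ⋯ w_{t-1})`, we have `δ*(q, w_s ⋯ w_{t-1}) = q`. -/
theorem dfa_ramsey_pumping :
    ∀ k : ℕ, ∃ K : ℕ, ∀ (Q : Type) [Fintype Q], Fintype.card Q = k →
      ∀ (α : Type) [Fintype α] (δ : Q → α → Q) (w : ℕ → List α) (q : ℕ → Q),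
        ∃ s t : ℕ, 1 ≤ s ∧ s < t ∧ t ≤ K ∧
          (((List.Ico s t).map w).flatten).foldl δ
              ((((List.Ico (s + 1) t).map w).flatten).foldl δ (q s)) =
            (((List.Ico (s + 1) t).map w).flatten).foldl δ (q s) := by
  intro k
  classical
  refine ⟨(k ^ k + 1) ^ (k ^ k + 2), fun Q _ hk α _ δ w q => ?_⟩
  have hcard : Fintype.card (Q → Q) = k ^ k := by rw [Fintype.card_fun, hk]
  obtain ⟨s, t, u, hs, hst, htu, hu, hstu, htsu⟩ := exists_monochromatic_triangle (runMap δ w)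
  rw [hcard] at hu
  refine ⟨s, u, hs, hst.trans htu, hu, ?_⟩
  set f := runMap δ w s u
  have hf : f ∘ f = f :=
    calc f ∘ f = runMap δ w t u ∘ runMap δ w s t := by rw [hstu, htsu]
      _ = f := runMap_comp δ w hst.le htu.le
  have hsucc : runMap δ w (s + 1) u = f ∘ runMap δ w (s + 1) t := by
    rw [← htsu, runMap_comp δ w hst htu.le]
  change f (runMap δ w (s + 1) u (q s)) = runMap δ w (s + 1) u (q s)
  rw [hsucc]
  exact congrFun hf _

end DocSpanners
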